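/- Suppose X* has all entries in [−1,1] and maximizes the map X ↦ det(L(X)ᵀL(X) + C) over all n×k matrices with entries in [−1,1], and suppose −1 < X*_{i₀j₀} < 1 for some row i₀ and column j₀. Then for every t ∈ [−1,1], the matrix X*(t) obtained from X* by replacing its (i₀,j₀) entry with t satisfies det(L(X*(t))ᵀL(X*(t)) + C) = det(L(X*)ᵀL(X*) + C); in particular every such X*(t) also maximizes the criterion. (This is Corollary 1 of the paper: if an optimal design for one of the 𝒟-criteria has a coordinate strictly inside (−1,1), then the criterion is constant under any exchange of that coordinate, so there are infinitely many optimal designs.) -/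

import Mathlib

/-!
Only row `i₀` of `L(X*(t))` depends on `t`, and it does so affinely, `w(t) = a + t c`. Hence
`L(X*(t))ᵀ L(X*(t)) + C = B + w(t) w(t)ᵀ` with `B` positive semidefinite and independent of `t`,
and the matrix determinant lemma `det (B + w wᵀ) = det B + wᵀ adj(B) w` makes the criterion a
quadratic in `t` with leading coefficient `cᵀ adj(B) c ≥ 0`. A convex quadratic attaining its
maximum over `[-1, 1]` at an interior point is constant.
-/

open Matrix

/-- The model matrix of an `m`-factor interaction model given by the family `𝒮` of
subsets of factor indices: entry `(i, S)` is `∏_{j ∈ S} X i j`. -/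
noncomputable def modelMatrix {n k : ℕ} (𝒮 : Finset (Finset (Fin k)))
    (X : Matrix (Fin n) (Fin k) ℝ) : Matrix (Fin n) {S // S ∈ 𝒮} ℝ :=
  Matrix.of fun i S => ∏ j ∈ S.1, X i j

/-- The full matrix `L(X) = [F(X) | Z]`. -/
noncomputable def fullMatrix {n k b : ℕ} (𝒮 : Finset (Finset (Fin k)))
    (Z : Matrix (Fin n) (Fin b) ℝ) (X : Matrix (Fin n) (Fin k) ℝ) :
    Matrix (Fin n) ({S // S ∈ 𝒮} ⊕ Fin b) ℝ :=
  Matrix.fromCols (modelMatrix 𝒮 X) Z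

/-- The design `X` with its `(i₀, j₀)` entry replaced by `t`. -/
def updateEntry {n k : ℕ} (X : Matrix (Fin n) (Fin k) ℝ) (i₀ : Fin n) (j₀ : Fin k)
    (t : ℝ) : Matrix (Fin n) (Fin k) ℝ :=
  Matrix.of fun i j => if i = i₀ ∧ j = j₀ then t else X i j

namespace Matrix

variable {m ι : Type*} [Fintype m] [DecidableEq m] [Unique ι]

theorem det_add_replicateCol_mul_replicateRow_of_isUnit {R : Type*} [CommRing R]
    {A : Matrix m m R} (hA : IsUnit A.det) (u v : m → R) :
    (A + replicateCol ι u * replicateRow ι v).det = A.det + v ⬝ᵥ A.adjugate *ᵥ u := by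
  have hfactor : A + replicateCol ι u * replicateRow ι v =
      A * (1 + replicateCol ι (A⁻¹ *ᵥ u) * replicateRow ι v) := by
    rw [Matrix.mul_add, Matrix.mul_one, ← Matrix.mul_assoc, ← replicateCol_mulVec,
      mulVec_mulVec, mul_nonsing_inv _ hA, one_mulVec]
  rw [hfactor, det_mul, det_one_add_replicateCol_mul_replicateRow, ← cramer_eq_adjugate_mulVec,
    ← det_smul_inv_mulVec_eq_cramer _ _ hA, dotProduct_smul, smul_eq_mul]
  ring

theorem det_add_replicateCol_mul_replicateRow_eq_add_adjugate {𝕜 : Type*}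
    [NontriviallyNormedField 𝕜] [CompleteSpace 𝕜] (A : Matrix m m 𝕜) (u v : m → 𝕜) :
    (A + replicateCol ι u * replicateRow ι v).det = A.det + v ⬝ᵥ A.adjugate *ᵥ u := by
  let shift : 𝕜 → Matrix m m 𝕜 := fun ε => ε • (1 : Matrix m m 𝕜) + A
  have hshift : Continuous shift :=
    (continuous_id.smul continuous_const).add continuous_const
  have hdense : Dense {ε : 𝕜 | IsUnit (shift ε).det} := by
    have hfin : {ε : 𝕜 | (-A).charpoly.IsRoot ε}.Finite :=
      Polynomial.finite_setOfPred_isRoot (charpoly_monic _).ne_zero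
    convert hfin.countable.dense_compl 𝕜 using 1
    ext ε
    simp [shift, eval_charpoly, sub_neg_eq_add, isUnit_iff_ne_zero, smul_one_eq_diagonal]
  have key := (hshift.add continuous_const).matrix_det.ext_on hdense
    (hshift.matrix_det.add (continuous_const.dotProduct
      (hshift.matrix_adjugate.matrix_mulVec continuous_const)))
    (fun ε hε => det_add_replicateCol_mul_replicateRow_of_isUnit (ι := ι) hε u v)
  simpa [shift] using congrFun key 0

open ComplexOrder in
theorem PosSemidef.adjugate {𝕜 : Type*} [RCLike 𝕜] {B : Matrix m m 𝕜} (hB : B.PosSemidef) :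
    B.adjugate.PosSemidef := by
  obtain ⟨N, rfl⟩ : ∃ N : Matrix m m 𝕜, B = star N * N := by
    open MatrixOrder in exact CStarAlgebra.nonneg_iff_eq_star_mul_self.mp hB.nonneg
  rw [adjugate_mul_distrib, star_eq_conjTranspose, ← adjugate_conjTranspose]
  exact posSemidef_self_mul_conjTranspose _

theorem transpose_mul_self_eq_updateRow_zero_add {n p R : Type*} [Fintype n] [DecidableEq n]
    [CommSemiring R] (M : Matrix n p R) (i : n) :
    Mᵀ * M = (updateRow M i 0)ᵀ * updateRow M i 0 +
      replicateCol Unit (M i) * replicateRow Unit (M i) := by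
  ext p q
  simp only [add_apply, mul_apply, transpose_apply, replicateCol_apply, replicateRow_apply,
    Finset.univ_unique, Finset.sum_singleton]
  rw [← Finset.add_sum_erase _ _ (Finset.mem_univ i),
    ← Finset.add_sum_erase _ _ (Finset.mem_univ i), updateRow_self]
  simp only [Pi.zero_apply, mul_zero, zero_add, add_comm]
  congr 1
  refine Finset.sum_congr rfl fun i' hi' => ?_
  rw [updateRow_ne (Finset.ne_of_mem_erase hi')]

theorem PosSemidef.exists_det_add_replicateCol_mul_replicateRow_eq_quadratic
    {B : Matrix m m ℝ} (hB : B.PosSemidef) (a c : m → ℝ) :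
    ∃ α β γ : ℝ, 0 ≤ α ∧ ∀ t : ℝ,
      (B + replicateCol ι (a + t • c) * replicateRow ι (a + t • c)).det =
        α * t ^ 2 + β * t + γ := by
  refine ⟨c ⬝ᵥ B.adjugate *ᵥ c, a ⬝ᵥ B.adjugate *ᵥ c + c ⬝ᵥ B.adjugate *ᵥ a,
    B.det + a ⬝ᵥ B.adjugate *ᵥ a, hB.adjugate.dotProduct_mulVec_nonneg c, fun t => ?_⟩
  rw [det_add_replicateCol_mul_replicateRow_eq_add_adjugate]
  simp only [add_dotProduct, smul_dotProduct, mulVec_add, mulVec_smul, dotProduct_add,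
    dotProduct_smul, smul_eq_mul]
  ring

end Matrix

theorem quadratic_coeffs_eq_zero_of_isMaxOn_Icc {α β γ a b t₀ : ℝ} (hα : 0 ≤ α)
    (ht₀ : t₀ ∈ Set.Ioo a b) (hmax : IsMaxOn (fun t => α * t ^ 2 + β * t + γ) (Set.Icc a b) t₀) :
    α = 0 ∧ β = 0 := by
  obtain ⟨hat₀, ht₀b⟩ := ht₀
  have hb : α * b ^ 2 + β * b + γ ≤ α * t₀ ^ 2 + β * t₀ + γ :=
    hmax ⟨by linarith, le_rfl⟩
  have ha : α * a ^ 2 + β * a + γ ≤ α * t₀ ^ 2 + β * t₀ + γ :=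
    hmax ⟨le_rfl, by linarith⟩
  -- `q t - q t₀ = (t - t₀) (α (t + t₀) + β)`, so the slope term changes sign across `t₀`
  have hslope_b : α * (b + t₀) + β ≤ 0 := by nlinarith
  have hslope_a : 0 ≤ α * (a + t₀) + β := by nlinarith
  have hα0 : α = 0 := by nlinarith
  subst hα0
  exact ⟨rfl, by linarith⟩

section Design

variable {n k b : ℕ}

theorem updateEntry_apply_of_ne (X : Matrix (Fin n) (Fin k) ℝ) {i i₀ : Fin n} (h : i ≠ i₀)
    (j₀ : Fin k) (t : ℝ) : updateEntry X i₀ j₀ t i = X i := by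
  ext j
  simp [updateEntry, h]

theorem updateEntry_apply_self (X : Matrix (Fin n) (Fin k) ℝ) (i₀ : Fin n) (j₀ : Fin k)
    (t : ℝ) : updateEntry X i₀ j₀ t i₀ = Function.update (X i₀) j₀ t := by
  ext j
  by_cases h : j = j₀ <;> simp [updateEntry, h]

theorem updateEntry_self (X : Matrix (Fin n) (Fin k) ℝ) (i₀ : Fin n) (j₀ : Fin k) :
    updateEntry X i₀ j₀ (X i₀ j₀) = X := by
  ext i j
  by_cases h : i = i₀ ∧ j = j₀
  · obtain ⟨rfl, rfl⟩ := h
    simp [updateEntry]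
  · simp [updateEntry, h]

theorem updateEntry_mem_Icc {X : Matrix (Fin n) (Fin k) ℝ} {a b : ℝ}
    (hX : ∀ i j, X i j ∈ Set.Icc a b) (i₀ : Fin n) (j₀ : Fin k) {t : ℝ} (ht : t ∈ Set.Icc a b) :
    ∀ i j, updateEntry X i₀ j₀ t i j ∈ Set.Icc a b := by
  intro i j
  simp only [updateEntry, of_apply]
  split_ifs
  exacts [ht, hX i j]

variable (𝒮 : Finset (Finset (Fin k))) (Z : Matrix (Fin n) (Fin b) ℝ)

theorem fullMatrix_row_congr {X X' : Matrix (Fin n) (Fin k) ℝ} {i : Fin n} (h : X i = X' i) :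
    fullMatrix 𝒮 Z X i = fullMatrix 𝒮 Z X' i := by
  ext (S | q) <;> simp [fullMatrix, modelMatrix, h]

theorem updateRow_fullMatrix_updateEntry (X : Matrix (Fin n) (Fin k) ℝ) (i₀ : Fin n)
    (j₀ : Fin k) (t : ℝ) :
    updateRow (fullMatrix 𝒮 Z (updateEntry X i₀ j₀ t)) i₀ 0 =
      updateRow (fullMatrix 𝒮 Z X) i₀ 0 := by
  ext i p
  by_cases h : i = i₀
  · subst h
    simp
  · rw [updateRow_ne h, updateRow_ne h,
      fullMatrix_row_congr 𝒮 Z (updateEntry_apply_of_ne X h j₀ t)]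

/-- Each monomial `∏_{j ∈ S} x_j` is affine in the coordinate `x_{j₀}`. -/
theorem fullMatrix_updateEntry_row_eq_affine (X : Matrix (Fin n) (Fin k) ℝ) (i₀ : Fin n)
    (j₀ : Fin k) (t : ℝ) :
    fullMatrix 𝒮 Z (updateEntry X i₀ j₀ t) i₀ =
      fullMatrix 𝒮 Z (updateEntry X i₀ j₀ 0) i₀ +
        t • (fullMatrix 𝒮 Z (updateEntry X i₀ j₀ 1) i₀ -
          fullMatrix 𝒮 Z (updateEntry X i₀ j₀ 0) i₀) := by
  ext (S | q)
  · by_cases hj : j₀ ∈ S.1 <;>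
      simp [fullMatrix, modelMatrix, updateEntry_apply_self, Finset.prod_update_of_mem,
        Finset.prod_update_of_notMem, hj]
  · simp [fullMatrix]

theorem exists_det_gram_updateEntry_add_eq_quadratic
    {C : Matrix ({S // S ∈ 𝒮} ⊕ Fin b) ({S // S ∈ 𝒮} ⊕ Fin b) ℝ} (hC : C.PosSemidef)
    (X : Matrix (Fin n) (Fin k) ℝ) (i₀ : Fin n) (j₀ : Fin k) :
    ∃ α β γ : ℝ, 0 ≤ α ∧ ∀ t : ℝ,
      ((fullMatrix 𝒮 Z (updateEntry X i₀ j₀ t))ᵀ * fullMatrix 𝒮 Z (updateEntry X i₀ j₀ t) +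
        C).det = α * t ^ 2 + β * t + γ := by
  set Y := updateRow (fullMatrix 𝒮 Z X) i₀ 0
  have hB : (C + Yᵀ * Y).PosSemidef := by
    simpa using hC.add (posSemidef_conjTranspose_mul_self Y)
  obtain ⟨α, β, γ, hα, hq⟩ :=
    hB.exists_det_add_replicateCol_mul_replicateRow_eq_quadratic (ι := Unit)
    (fullMatrix 𝒮 Z (updateEntry X i₀ j₀ 0) i₀)
    (fullMatrix 𝒮 Z (updateEntry X i₀ j₀ 1) i₀ - fullMatrix 𝒮 Z (updateEntry X i₀ j₀ 0) i₀)
  refine ⟨α, β, γ, hα, fun t => ?_⟩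
  rw [← hq t, transpose_mul_self_eq_updateRow_zero_add _ i₀, updateRow_fullMatrix_updateEntry,
    ← fullMatrix_updateEntry_row_eq_affine, add_comm _ C, add_assoc]

end Design

theorem stmt2_general (n k b : ℕ)
    (𝒮 : Finset (Finset (Fin k)))
    (Z : Matrix (Fin n) (Fin b) ℝ)
    (C : Matrix ({S // S ∈ 𝒮} ⊕ Fin b) ({S // S ∈ 𝒮} ⊕ Fin b) ℝ)
    (hC : C.PosSemidef)
    (Xstar : Matrix (Fin n) (Fin k) ℝ)
    (hXstar : ∀ i j, Xstar i j ∈ Set.Icc (-1 : ℝ) 1)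
    (hopt : ∀ X' : Matrix (Fin n) (Fin k) ℝ, (∀ i j, X' i j ∈ Set.Icc (-1 : ℝ) 1) →
      ((fullMatrix 𝒮 Z X')ᵀ * fullMatrix 𝒮 Z X' + C).det ≤
        ((fullMatrix 𝒮 Z Xstar)ᵀ * fullMatrix 𝒮 Z Xstar + C).det)
    (i₀ : Fin n) (j₀ : Fin k)
    (hint : Xstar i₀ j₀ ∈ Set.Ioo (-1 : ℝ) 1) :
    ∀ t ∈ Set.Icc (-1 : ℝ) 1,
      ((fullMatrix 𝒮 Z (updateEntry Xstar i₀ j₀ t))ᵀ *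
          fullMatrix 𝒮 Z (updateEntry Xstar i₀ j₀ t) + C).det =
        ((fullMatrix 𝒮 Z Xstar)ᵀ * fullMatrix 𝒮 Z Xstar + C).det ∧
      ∀ X' : Matrix (Fin n) (Fin k) ℝ, (∀ i j, X' i j ∈ Set.Icc (-1 : ℝ) 1) →
        ((fullMatrix 𝒮 Z X')ᵀ * fullMatrix 𝒮 Z X' + C).det ≤
          ((fullMatrix 𝒮 Z (updateEntry Xstar i₀ j₀ t))ᵀ *
            fullMatrix 𝒮 Z (updateEntry Xstar i₀ j₀ t) + C).det := by
  intro t _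
  obtain ⟨α, β, γ, hα, hq⟩ := exists_det_gram_updateEntry_add_eq_quadratic 𝒮 Z hC Xstar i₀ j₀
  have hq₀ : ((fullMatrix 𝒮 Z Xstar)ᵀ * fullMatrix 𝒮 Z Xstar + C).det =
      α * Xstar i₀ j₀ ^ 2 + β * Xstar i₀ j₀ + γ := by
    rw [← hq, updateEntry_self]
  have hmaxOn : IsMaxOn (fun t => α * t ^ 2 + β * t + γ) (Set.Icc (-1) 1) (Xstar i₀ j₀) :=
    isMaxOn_iff.2 fun t' ht' => by
      simpa only [hq, hq₀] using hopt _ (updateEntry_mem_Icc hXstar i₀ j₀ ht')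
  obtain ⟨rfl, rfl⟩ := quadratic_coeffs_eq_zero_of_isMaxOn_Icc hα hint hmaxOn
  rw [hq, hq₀]
  exact ⟨by ring, fun X' hX' => by simpa [hq₀] using hopt X' hX'⟩

/-- Corollary 1 of the paper: if an optimal design for one of the `𝒟`-criteria has a
coordinate strictly inside `(-1, 1)`, then the criterion is constant under any exchange
of that coordinate, so every such exchanged design is also optimal. -/
theorem stmt2 (n k m b : ℕ) (hn : 0 < n) (hk : 0 < k) (hm : 0 < m) (hmk : m ≤ k)
    (hb : 0 < b)
    (𝒮 : Finset (Finset (Fin k)))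
    (hsingle : ∀ j : Fin k, {j} ∈ 𝒮)
    (hS : ∀ S ∈ 𝒮, S.Nonempty ∧ S.card ≤ m)
    (hmax : ∃ S ∈ 𝒮, S.card = m)
    (Z : Matrix (Fin n) (Fin b) ℝ)
    (C : Matrix ({S // S ∈ 𝒮} ⊕ Fin b) ({S // S ∈ 𝒮} ⊕ Fin b) ℝ)
    (hC : C.PosSemidef)
    (Xstar : Matrix (Fin n) (Fin k) ℝ)
    (hXstar : ∀ i j, Xstar i j ∈ Set.Icc (-1 : ℝ) 1)
    (hopt : ∀ X' : Matrix (Fin n) (Fin k) ℝ, (∀ i j, X' i j ∈ Set.Icc (-1 : ℝ) 1) →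
      ((fullMatrix 𝒮 Z X')ᵀ * fullMatrix 𝒮 Z X' + C).det ≤
        ((fullMatrix 𝒮 Z Xstar)ᵀ * fullMatrix 𝒮 Z Xstar + C).det)
    (i₀ : Fin n) (j₀ : Fin k)
    (hint : Xstar i₀ j₀ ∈ Set.Ioo (-1 : ℝ) 1) :
    ∀ t ∈ Set.Icc (-1 : ℝ) 1,
      ((fullMatrix 𝒮 Z (updateEntry Xstar i₀ j₀ t))ᵀ *
          fullMatrix 𝒮 Z (updateEntry Xstar i₀ j₀ t) + C).det =
        ((fullMatrix 𝒮 Z Xstar)ᵀ * fullMatrix 𝒮 Z Xstar + C).det ∧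
      ∀ X' : Matrix (Fin n) (Fin k) ℝ, (∀ i j, X' i j ∈ Set.Icc (-1 : ℝ) 1) →
        ((fullMatrix 𝒮 Z X')ᵀ * fullMatrix 𝒮 Z X' + C).det ≤
          ((fullMatrix 𝒮 Z (updateEntry Xstar i₀ j₀ t))ᵀ *
            fullMatrix 𝒮 Z (updateEntry Xstar i₀ j₀ t) + C).det :=
  stmt2_general n k b 𝒮 Z C hC Xstar hXstar hopt i₀ j₀ hint
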